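/- arXiv:2105.14299 — 6 statements merged into one kernel-verified Lean document; each statement's English description precedes it below -/
import Mathlib

section
/- Let λ : ℝ and ψ ≠ 0 with A ψ = λ • ψ. Suppose B : H →L[ℂ] H is a left inverse of (λ + i s) • 1 − A_s, i.e. B (((λ + i s) • x) − A_s x) = x for all x ∈ H. Then ‖ψ‖ ≤ s · ‖B‖ · ‖ψ − P ψ‖. (This is the core resolvent estimate in the proof of Theorem 2.2: since (λ + i s − L_s)ψ = i s χ_{Ω∖R} ψ, the norm of the resolvent at λ + i s is at least ‖ψ‖/(s‖ψ‖_{L²(Ω∖R)}).) -/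
/-! On an eigenvector `ψ` of `A` with eigenvalue `λ`, the shifted operator `(λ + i s) - A_s` acts
as `i s (1 - P)`, so the left inverse gives `ψ = i s • B (ψ - P ψ)`. -/

open Complex

theorem norm_le_norm_mul_opNorm_mul_norm_of_apply_smul_eq {𝕜 E F : Type*}
    [NontriviallyNormedField 𝕜] [SeminormedAddCommGroup E] [NormedSpace 𝕜 E]
    [SeminormedAddCommGroup F] [NormedSpace 𝕜 F] (B : E →L[𝕜] F) (c : 𝕜) {v : E} {x : F}
    (h : B (c • v) = x) : ‖x‖ ≤ ‖c‖ * ‖B‖ * ‖v‖ := by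
  rw [← h, map_smul, norm_smul, mul_assoc]
  gcongr
  exact B.le_opNorm v

theorem norm_ofReal_mul_I_of_nonneg {s : ℝ} (hs : 0 ≤ s) : ‖(s : ℂ) * I‖ = s := by
  rw [norm_mul, norm_I, mul_one, norm_real, Real.norm_of_nonneg hs]

theorem stmt3_general {H : Type*} [NormedAddCommGroup H] [InnerProductSpace ℂ H]
    (A P : H →L[ℂ] H)
    (s : ℝ) (hs : 0 < s) (lam : ℝ) (ψ : H) (heig : A ψ = (lam : ℂ) • ψ)
    (B : H →L[ℂ] H)
    (hB : ∀ x : H, B ((((lam : ℂ) + s * Complex.I) • x) - (A x + (s * Complex.I) • P x)) = x) :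
    ‖ψ‖ ≤ s * ‖B‖ * ‖ψ - P ψ‖ := by
  have shifted_apply : (((lam : ℂ) + s * I) • ψ) - (A ψ + (s * I) • P ψ)
      = ((s : ℂ) * I) • (ψ - P ψ) := by
    rw [heig]
    module
  have hψ := norm_le_norm_mul_opNorm_mul_norm_of_apply_smul_eq B _ (shifted_apply ▸ hB ψ)
  rwa [norm_ofReal_mul_I_of_nonneg hs.le] at hψ

/-- Core resolvent estimate in the proof of Theorem 2.2: if `A ψ = λ ψ`, `ψ ≠ 0`, and
`B` is a left inverse of `(λ + i s) - A_s`, then `‖ψ‖ ≤ s ‖B‖ ‖ψ - P ψ‖`. -/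
theorem stmt3 {H : Type*} [NormedAddCommGroup H] [InnerProductSpace ℂ H] [CompleteSpace H]
    (A P : H →L[ℂ] H) (hA : IsSelfAdjoint A) (hP : IsSelfAdjoint P) (hP2 : P ∘L P = P)
    (s : ℝ) (hs : 0 < s) (lam : ℝ) (ψ : H) (hψ : ψ ≠ 0) (heig : A ψ = (lam : ℂ) • ψ)
    (B : H →L[ℂ] H)
    (hB : ∀ x : H, B ((((lam : ℂ) + s * Complex.I) • x) - (A x + (s * Complex.I) • P x)) = x) :
    ‖ψ‖ ≤ s * ‖B‖ * ‖ψ - P ψ‖ :=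
  stmt3_general A P s hs lam ψ heig B hB
end

section
/- (Theorem 2.2, estimate (2.2)) Assume in addition that A_s is star-normal (it commutes with its adjoint), as the paper asserts for L_s; for a normal operator the norm of the resolvent at a point equals the reciprocal of the distance to the spectrum. Let λ : ℝ and ψ ≠ 0 with A ψ = λ • ψ. Then the distance from the complex number λ + i s to the spectrum of A_s satisfies Metric.infDist (λ + i s) (spectrum ℂ A_s) ≤ s · ‖ψ − P ψ‖ / ‖ψ‖ = s · δ(ψ). -/
/-!
Since `A ψ = λ ψ`, the shifted operator satisfies `(λ + i s - A_s) ψ = i s (ψ - P ψ)`. For a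
normal operator `T` the resolvent `(z - T)⁻¹` is normal, so its norm equals its spectral radius
`1 / dist(z, σ(T))`; hence `dist(z, σ(T)) ‖x‖ ≤ ‖(z - T) x‖` for every vector `x`, and `x = ψ`
gives the estimate.
-/

open Metric

theorem IsStarNormal.algebraMap_sub {R A : Type*} [CommSemiring R] [StarRing R] [Ring A]
    [StarRing A] [Algebra R A] [StarModule R A] (r : R) {a : A} (ha : IsStarNormal a) :
    IsStarNormal (algebraMap R A r - a) where
  star_comm_self := by
    rw [star_sub, ← algebraMap_star_comm]
    exact (((Algebra.commute_algebraMap_left _ _).sub_right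
      (Algebra.commute_algebraMap_left _ _)).sub_left
      ((Algebra.commute_algebraMap_right _ _).sub_right ha.star_comm_self))

section CStarAlgebra

variable {A : Type*} [CStarAlgebra A]

theorem IsStarNormal.infDist_spectrum_le_inv_norm_resolvent {a : A} (ha : IsStarNormal a)
    (z : ℂ) : infDist z (spectrum ℂ a) ≤ ‖resolvent a z‖⁻¹ := by
  cases subsingleton_or_nontrivial A
  · simp [spectrum.of_subsingleton]
  by_cases hz : z ∈ spectrum ℂ a
  · simp [infDist_zero_of_mem hz, spectrum.resolvent_zero_of_mem_spectrum hz]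
  have hu : IsUnit (algebraMap ℂ A z - a) := spectrum.notMem_iff.mp hz
  have : IsStarNormal (hu.unit : A) := by rw [hu.unit_spec]; exact ha.algebraMap_sub z
  -- The spectral radius of the normal element `resolvent a z` is its norm, and is attained.
  obtain ⟨w, hw, hw_norm⟩ := spectrum.exists_nnnorm_eq_spectralRadius (↑hu.unit⁻¹ : A)
  rw [IsStarNormal.spectralRadius_eq_nnnorm, ENNReal.coe_inj] at hw_norm
  have hw0 : w ≠ 0 := by
    rintro rfl
    exact spectrum.zero_notMem ℂ (Units.isUnit _) hw
  have hw_inv : w⁻¹ ∈ spectrum ℂ (algebraMap ℂ A z - a) := by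
    have := spectrum.inv_mem_iff (r := (Units.mk0 w hw0)⁻¹) (a := hu.unit)
    simpa [hu.unit_spec] using this.mpr (by simpa using hw)
  rw [← spectrum.singleton_sub_eq, Set.singleton_sub] at hw_inv
  obtain ⟨μ, hμ, hμw : z - μ = w⁻¹⟩ := hw_inv
  calc infDist z (spectrum ℂ a) ≤ dist z μ := infDist_le_dist_of_mem hμ
    _ = ‖w‖⁻¹ := by rw [dist_eq_norm, hμw, norm_inv]
    _ = ‖resolvent a z‖⁻¹ := by
      rw [spectrum.resolvent_eq (spectrum.mem_resolventSet_iff.mpr hu), ← coe_nnnorm, hw_norm,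
        coe_nnnorm]

end CStarAlgebra

theorem IsStarNormal.infDist_spectrum_mul_norm_le {E : Type*} [NormedAddCommGroup E]
    [InnerProductSpace ℂ E] [CompleteSpace E] {T : E →L[ℂ] E} (hT : IsStarNormal T) (z : ℂ)
    (x : E) : infDist z (spectrum ℂ T) * ‖x‖ ≤ ‖z • x - T x‖ := by
  by_cases hz : z ∈ spectrum ℂ T
  · simp [infDist_zero_of_mem hz]
  set R := resolvent T z
  have hRx : R (z • x - T x) = x := by
    have hRT : R * (algebraMap ℂ _ z - T) = 1 :=
      Ring.inverse_mul_cancel _ (spectrum.notMem_iff.mp hz)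
    simpa using congr($hRT x)
  calc infDist z (spectrum ℂ T) * ‖x‖ ≤ ‖R‖⁻¹ * ‖R (z • x - T x)‖ := by
        rw [hRx]; gcongr; exact hT.infDist_spectrum_le_inv_norm_resolvent z
    _ ≤ ‖R‖⁻¹ * (‖R‖ * ‖z • x - T x‖) := by gcongr; exact R.le_opNorm _
    _ ≤ ‖z • x - T x‖ := by
      rw [← mul_assoc]
      exact mul_le_of_le_one_left (norm_nonneg _) (inv_mul_le_one_of_le₀ le_rfl (norm_nonneg _))

theorem stmt4_general {H : Type*} [NormedAddCommGroup H] [InnerProductSpace ℂ H] [CompleteSpace H]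
    (A P : H →L[ℂ] H)
    (s : ℝ) (hs : 0 < s)
    (hnormal : IsStarNormal (A + (s * Complex.I) • P))
    (lam : ℝ) (ψ : H) (hψ : ψ ≠ 0) (heig : A ψ = (lam : ℂ) • ψ) :
    Metric.infDist ((lam : ℂ) + s * Complex.I) (spectrum ℂ (A + (s * Complex.I) • P))
      ≤ s * ‖ψ - P ψ‖ / ‖ψ‖ := by
  have hshift : ((lam : ℂ) + s * Complex.I) • ψ - (A + (s * Complex.I) • P) ψ =
      (s * Complex.I) • (ψ - P ψ) := by
    simp only [add_apply, smul_apply, heig, add_smul, smul_sub]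
    abel
  have hbound := hnormal.infDist_spectrum_mul_norm_le ((lam : ℂ) + s * Complex.I) ψ
  rw [hshift, norm_smul, norm_mul, Complex.norm_I, mul_one, Complex.norm_of_nonneg hs.le]
    at hbound
  rwa [le_div_iff₀ (norm_pos_iff.mpr hψ)]

/-- Theorem 2.2, estimate (2.2): if `A_s = A + i s P` is star-normal and `A ψ = λ ψ`
with `ψ ≠ 0`, then `dist(λ + i s, Spec(A_s)) ≤ s ‖ψ - P ψ‖ / ‖ψ‖ = s δ(ψ)`. -/
theorem stmt4 {H : Type*} [NormedAddCommGroup H] [InnerProductSpace ℂ H] [CompleteSpace H]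
    (A P : H →L[ℂ] H) (hA : IsSelfAdjoint A) (hP : IsSelfAdjoint P) (hP2 : P ∘L P = P)
    (s : ℝ) (hs : 0 < s)
    (hnormal : IsStarNormal (A + (s * Complex.I) • P))
    (lam : ℝ) (ψ : H) (hψ : ψ ≠ 0) (heig : A ψ = (lam : ℂ) • ψ) :
    Metric.infDist ((lam : ℂ) + s * Complex.I) (spectrum ℂ (A + (s * Complex.I) • P))
      ≤ s * ‖ψ - P ψ‖ / ‖ψ‖ :=
  stmt4_general A P s hs hnormal lam ψ hψ heig
end

section
/- (Theorem 2.4, lower bound in (2.5)) Let (μ, φ) be an eigenpair of A_s with ‖φ‖ = 1, and write δ = ‖φ − P φ‖. Then for every real t one has s · δ² ≤ |(t + i s) − μ| (absolute value in ℂ); consequently s · δ² ≤ Metric.infDist μ ((fun t : ℝ => (t : ℂ) + s * Complex.I) '' spectrum ℝ A), i.e. μ is at distance at least s δ(φ)² from the shifted spectrum Spec(A) + i s (the spectrum of A is nonempty since φ ≠ 0 forces H ≠ 0). -/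
/-!
Pairing the eigenvalue equation with `φ` gives `Im μ = s ‖P φ‖²`, because `⟪φ, A φ⟫` is real and
`⟪φ, P φ⟫ = ‖P φ‖²`. By Pythagoras `‖φ‖² = ‖P φ‖² + ‖φ - P φ‖²`, so `Im (t + i s - μ) = s ‖φ - P φ‖²`
for every real `t`, and `|z| ≥ |Im z|`. The infimum over the shifted spectrum is then bounded
below pointwise, the real spectrum of `A` being nonempty because `H ≠ 0`.
-/

namespace IsStarProjection

variable {𝕜 E : Type*} [RCLike 𝕜] [NormedAddCommGroup E] [InnerProductSpace 𝕜 E] [CompleteSpace E]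
  {P : E →L[𝕜] E}

theorem apply_apply (hP : IsStarProjection P) (x : E) : P (P x) = P x := by
  rw [← ContinuousLinearMap.comp_apply, ← ContinuousLinearMap.mul_def, hP.isIdempotentElem.eq]

theorem inner_self_apply (hP : IsStarProjection P) (x : E) :
    inner 𝕜 x (P x) = (‖P x‖ : 𝕜) ^ 2 := by
  rw [← inner_self_eq_norm_sq_to_K]
  calc inner 𝕜 x (P x) = inner 𝕜 x (P (P x)) := by rw [hP.apply_apply]
    _ = inner 𝕜 (P x) (P x) := (hP.isSelfAdjoint.isSymmetric x (P x)).symm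

theorem inner_apply_sub_apply (hP : IsStarProjection P) (x : E) :
    inner 𝕜 (P x) (x - P x) = 0 := by
  rw [inner_sub_right, ← inner_conj_symm, hP.inner_self_apply, inner_self_eq_norm_sq_to_K]
  simp

theorem norm_sub_apply_sq (hP : IsStarProjection P) (x : E) :
    ‖x - P x‖ ^ 2 = ‖x‖ ^ 2 - ‖P x‖ ^ 2 := by
  have := norm_add_sq_eq_norm_sq_add_norm_sq_of_inner_eq_zero _ _ (hP.inner_apply_sub_apply x)
  rw [add_sub_cancel] at this
  linarith

end IsStarProjection

section ShiftedEigenvalue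

variable {H : Type*} [NormedAddCommGroup H] [InnerProductSpace ℂ H] [CompleteSpace H]
  {A P : H →L[ℂ] H}

theorem im_mul_norm_sq_of_apply_add_I_smul_eq (hA : IsSelfAdjoint A) (hP : IsStarProjection P)
    {s : ℝ} {μ : ℂ} {x : H} (hx : A x + (s * Complex.I) • P x = μ • x) :
    μ.im * ‖x‖ ^ 2 = s * ‖P x‖ ^ 2 := by
  have hAx : (inner ℂ x (A x)).im = 0 := hA.isSymmetric.im_inner_self_apply x
  have h := congrArg (fun y => (inner ℂ x y).im) hx
  simp only [inner_add_right, inner_smul_right, inner_self_eq_norm_sq_to_K, hP.inner_self_apply,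
    Complex.add_im, hAx, Complex.coe_algebraMap, ← Complex.ofReal_pow, Complex.mul_im,
    Complex.mul_re, Complex.ofReal_re, Complex.ofReal_im, Complex.I_re, Complex.I_im, mul_zero,
    mul_one, sub_self, add_zero, zero_add] at h
  linarith

theorem mul_norm_sub_apply_sq_eq_im (hA : IsSelfAdjoint A) (hP : IsStarProjection P)
    {s : ℝ} {μ : ℂ} {x : H} (hx : A x + (s * Complex.I) • P x = μ • x) (hx1 : ‖x‖ = 1) (t : ℝ) :
    s * ‖x - P x‖ ^ 2 = ((t : ℂ) + s * Complex.I - μ).im := by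
  have hμ := im_mul_norm_sq_of_apply_add_I_smul_eq hA hP hx
  rw [hx1] at hμ
  rw [hP.norm_sub_apply_sq, hx1]
  simp only [one_pow, Complex.sub_im, Complex.add_im, Complex.ofReal_im, Complex.mul_im,
    Complex.ofReal_re, Complex.I_im, mul_one, Complex.I_re, mul_zero, add_zero, zero_add]
  linarith

end ShiftedEigenvalue

theorem stmt7_general {H : Type*} [NormedAddCommGroup H] [InnerProductSpace ℂ H] [CompleteSpace H]
    (A P : H →L[ℂ] H) (hA : IsSelfAdjoint A) (hP : IsSelfAdjoint P) (hP2 : P ∘L P = P)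
    (s : ℝ) (μ : ℂ) (φ : H) (hφ : ‖φ‖ = 1)
    (heig : A φ + (s * Complex.I) • P φ = μ • φ) :
    (∀ t : ℝ, s * ‖φ - P φ‖ ^ 2 ≤ ‖(t : ℂ) + s * Complex.I - μ‖) ∧
      s * ‖φ - P φ‖ ^ 2 ≤
        Metric.infDist μ ((fun t : ℝ => (t : ℂ) + s * Complex.I) '' spectrum ℝ A) := by
  have le_norm_shift_sub (t : ℝ) : s * ‖φ - P φ‖ ^ 2 ≤ ‖(t : ℂ) + s * Complex.I - μ‖ :=
    (mul_norm_sub_apply_sq_eq_im hA ⟨hP2, hP⟩ heig hφ t).trans_le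
      ((le_abs_self _).trans (Complex.abs_im_le_norm _))
  refine ⟨le_norm_shift_sub, ?_⟩
  have : Nontrivial H := ⟨φ, 0, norm_ne_zero_iff.mp (by simp [hφ])⟩
  rw [Metric.le_infDist ((ContinuousFunctionalCalculus.spectrum_nonempty A hA).image _)]
  rintro _ ⟨t, -, rfl⟩
  rw [dist_comm, dist_eq_norm]
  exact le_norm_shift_sub t

/-- Theorem 2.4, lower bound in (2.5): for an eigenpair `(μ, φ)` of `A_s` with `‖φ‖ = 1`
and `δ = ‖φ - P φ‖`, one has `s δ² ≤ |(t + i s) - μ|` for every real `t`, hence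
`s δ² ≤ dist(μ, Spec_ℝ(A) + i s)`. -/
theorem stmt7 {H : Type*} [NormedAddCommGroup H] [InnerProductSpace ℂ H] [CompleteSpace H]
    (A P : H →L[ℂ] H) (hA : IsSelfAdjoint A) (hP : IsSelfAdjoint P) (hP2 : P ∘L P = P)
    (s : ℝ) (hs : 0 < s) (μ : ℂ) (φ : H) (hφ : ‖φ‖ = 1)
    (heig : A φ + (s * Complex.I) • P φ = μ • φ) :
    (∀ t : ℝ, s * ‖φ - P φ‖ ^ 2 ≤ ‖(t : ℂ) + s * Complex.I - μ‖) ∧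
      s * ‖φ - P φ‖ ^ 2 ≤
        Metric.infDist μ ((fun t : ℝ => (t : ℂ) + s * Complex.I) '' spectrum ℝ A) :=
  stmt7_general A P hA hP hP2 s μ φ hφ heig
end

section
/- (Theorem 2.4, estimate (2.6)) Let (μ, φ) be an eigenpair of A_s with ‖φ‖ = 1, and write δ = ‖φ − P φ‖, τ = ‖P φ‖. Then the distance from the real number Re μ to the real spectrum of A satisfies Metric.infDist (Re μ) (spectrum ℝ A) ≤ s · δ · τ. -/
/-!
Pairing the eigen-equation with `φ` shows `Im μ = s ‖P φ‖²`, while `⟪φ, A φ⟫` is real, so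
`Re μ = ⟪φ, A φ⟫` and the residual `A φ - (Re μ) φ` is `-i s` times the component of `P φ`
orthogonal to `φ`; by Pythagoras its norm is `s ‖φ - P φ‖ ‖P φ‖`. For self-adjoint `A` the residual
of a real `λ` bounds its distance `d` to the spectrum, because `(A - λ)² ≥ d²` by the continuous
functional calculus.
-/

open Metric ContinuousLinearMap
open scoped InnerProductSpace

theorem IsSelfAdjoint.algebraMap_infDist_sq_le_sq {A : Type*} [CStarAlgebra A] [PartialOrder A]
    [StarOrderedRing A] {a : A} (ha : IsSelfAdjoint a) (r : ℝ) :
    algebraMap ℝ A (infDist r (spectrum ℝ a) ^ 2) ≤ (a - algebraMap ℝ A r) ^ 2 := by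
  have hcfc : (a - algebraMap ℝ A r) ^ 2 = cfc (fun x : ℝ => (x - r) ^ 2) a := by
    rw [cfc_pow .., cfc_sub .., cfc_id' .., cfc_const ..]
  rw [hcfc, algebraMap_le_cfc_iff _ _ _]
  intro x hx
  rw [← sq_abs (x - r), ← Real.dist_eq, dist_comm]
  exact pow_le_pow_left₀ infDist_nonneg (infDist_le_dist_of_mem hx) 2

section ComplexHilbert

variable {H : Type*} [NormedAddCommGroup H] [InnerProductSpace ℂ H]

theorem ContinuousLinearMap.mul_norm_sq_le_re_inner_of_algebraMap_le {T : H →L[ℂ] H} {c : ℝ}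
    (hT : algebraMap ℝ (H →L[ℂ] H) c ≤ T) (x : H) :
    c * ‖x‖ ^ 2 ≤ RCLike.re ⟪T x, x⟫_ℂ := by
  have := ((le_def _ _).mp hT).re_inner_nonneg_left x
  rwa [sub_apply, inner_sub_left, map_sub, sub_nonneg, Algebra.algebraMap_eq_smul_one, smul_apply,
    one_apply_eq_self, RCLike.real_smul_eq_coe_smul (K := ℂ), inner_smul_real_left, RCLike.smul_re,
    inner_self_eq_norm_sq] at this

theorem IsSelfAdjoint.infDist_spectrum_mul_norm_le [CompleteSpace H] {A : H →L[ℂ] H}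
    (hA : IsSelfAdjoint A) (r : ℝ) (x : H) :
    infDist r (spectrum ℝ A) * ‖x‖ ≤ ‖A x - (r : ℂ) • x‖ := by
  set B := A - algebraMap ℝ (H →L[ℂ] H) r
  have hB : IsSelfAdjoint B := hA.sub (.algebraMap _ (.all r))
  have hBx : B x = A x - (r : ℂ) • x := by
    simp [B, Algebra.algebraMap_eq_smul_one]
  have hsq : (infDist r (spectrum ℝ A) * ‖x‖) ^ 2 ≤ ‖B x‖ ^ 2 := by
    rw [apply_norm_sq_eq_inner_adjoint_left, hB.adjoint_eq, mul_pow]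
    exact mul_norm_sq_le_re_inner_of_algebraMap_le (hA.algebraMap_infDist_sq_le_sq r) x
  rw [← hBx]
  exact (pow_le_pow_iff_left₀ (mul_nonneg infDist_nonneg (norm_nonneg _)) (norm_nonneg _)
    two_ne_zero).mp hsq

end ComplexHilbert

section Projection

variable {𝕜 E : Type*} [RCLike 𝕜] [NormedAddCommGroup E] [InnerProductSpace 𝕜 E]

theorem norm_inner_smul_sub_sq {x : E} (hx : ‖x‖ = 1) (y : E) :
    ‖⟪x, y⟫_𝕜 • x - y‖ ^ 2 = ‖y‖ ^ 2 - ‖⟪x, y⟫_𝕜‖ ^ 2 := by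
  rw [@norm_sub_sq 𝕜, norm_smul, hx, inner_smul_left, RCLike.conj_mul, ← RCLike.ofReal_pow,
    RCLike.ofReal_re]
  ring

namespace ContinuousLinearMap.IsStarProjection

variable [CompleteSpace E] {p : E →L[𝕜] E}

theorem inner_apply_eq_norm_sq (hp : IsStarProjection p) (x : E) :
    ⟪x, p x⟫_𝕜 = (‖p x‖ : 𝕜) ^ 2 := by
  have hpp : p (p x) = p x := congr($hp.isIdempotentElem.eq x)
  calc ⟪x, p x⟫_𝕜 = ⟪x, p (p x)⟫_𝕜 := by rw [hpp]
    _ = ⟪p x, p x⟫_𝕜 := (hp.isSelfAdjoint.isSymmetric x (p x)).symm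
    _ = (‖p x‖ : 𝕜) ^ 2 := inner_self_eq_norm_sq_to_K _

theorem norm_sq_apply_add_norm_sq_sub_apply (hp : IsStarProjection p) (x : E) :
    ‖p x‖ ^ 2 + ‖x - p x‖ ^ 2 = ‖x‖ ^ 2 := by
  have horth : ⟪p x, x - p x⟫_𝕜 = 0 := by
    have hpp : p (p x) = p x := congr($hp.isIdempotentElem.eq x)
    calc ⟪p x, x - p x⟫_𝕜 = ⟪x, p (x - p x)⟫_𝕜 := hp.isSelfAdjoint.isSymmetric x (x - p x)
      _ = 0 := by rw [map_sub, hpp, sub_self, inner_zero_right]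
  simpa only [sq, add_sub_cancel] using
    (norm_add_sq_eq_norm_sq_add_norm_sq_of_inner_eq_zero _ _ horth).symm

theorem norm_inner_smul_sub_apply (hp : IsStarProjection p) {x : E} (hx : ‖x‖ = 1) :
    ‖⟪x, p x⟫_𝕜 • x - p x‖ = ‖x - p x‖ * ‖p x‖ := by
  have hpyth := hp.norm_sq_apply_add_norm_sq_sub_apply x
  rw [hx] at hpyth
  refine (sq_eq_sq₀ (norm_nonneg _) (by positivity)).mp ?_
  rw [norm_inner_smul_sub_sq hx, hp.inner_apply_eq_norm_sq, norm_pow, RCLike.norm_ofReal,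
    abs_norm]
  linear_combination (-‖p x‖ ^ 2) * hpyth

end ContinuousLinearMap.IsStarProjection

end Projection

section ShiftedEigenpair

variable {H : Type*} [NormedAddCommGroup H] [InnerProductSpace ℂ H] [CompleteSpace H]
  {A P : H →L[ℂ] H} {s : ℝ} {μ : ℂ} {φ : H}

theorem im_eq_mul_norm_sq_of_apply_add_smul_apply_eq_smul (hA : IsSelfAdjoint A)
    (hP : IsStarProjection P) (hφ : ‖φ‖ = 1) (heig : A φ + (s * Complex.I) • P φ = μ • φ) :
    μ.im = s * ‖P φ‖ ^ 2 := by
  have h := congr(⟪φ, $heig⟫_ℂ)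
  rw [inner_add_right, inner_smul_right, inner_smul_right, inner_self_eq_norm_sq_to_K, hφ,
    hP.inner_apply_eq_norm_sq] at h
  have hreal : (⟪φ, A φ⟫_ℂ).im = 0 := hA.isSymmetric.im_inner_self_apply φ
  simpa [hreal, ← Complex.ofReal_pow] using congr(Complex.im $h).symm

theorem apply_sub_re_smul_eq_of_apply_add_smul_apply_eq_smul (hA : IsSelfAdjoint A)
    (hP : IsStarProjection P) (hφ : ‖φ‖ = 1) (heig : A φ + (s * Complex.I) • P φ = μ • φ) :
    A φ - (μ.re : ℂ) • φ = (s * Complex.I) • (⟪φ, P φ⟫_ℂ • φ - P φ) := by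
  have hμ : μ - μ.re = s * Complex.I * ⟪φ, P φ⟫_ℂ := by
    rw [hP.inner_apply_eq_norm_sq]
    apply Complex.ext <;>
      simp [im_eq_mul_norm_sq_of_apply_add_smul_apply_eq_smul hA hP hφ heig, ← Complex.ofReal_pow]
  rw [eq_sub_of_add_eq heig, smul_sub, smul_smul, ← hμ, sub_smul]
  abel

end ShiftedEigenpair

/-- Theorem 2.4, estimate (2.6): for an eigenpair `(μ, φ)` of `A_s` with `‖φ‖ = 1`,
`dist(Re μ, Spec_ℝ(A)) ≤ s δ τ` where `δ = ‖φ - P φ‖` and `τ = ‖P φ‖`. -/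
theorem stmt9 {H : Type*} [NormedAddCommGroup H] [InnerProductSpace ℂ H] [CompleteSpace H]
    (A P : H →L[ℂ] H) (hA : IsSelfAdjoint A) (hP : IsSelfAdjoint P) (hP2 : P ∘L P = P)
    (s : ℝ) (hs : 0 < s) (μ : ℂ) (φ : H) (hφ : ‖φ‖ = 1)
    (heig : A φ + (s * Complex.I) • P φ = μ • φ) :
    Metric.infDist μ.re (spectrum ℝ A) ≤ s * ‖φ - P φ‖ * ‖P φ‖ := by
  have hPproj : IsStarProjection P := ⟨hP2, hP⟩
  calc infDist μ.re (spectrum ℝ A) = infDist μ.re (spectrum ℝ A) * ‖φ‖ := by rw [hφ, mul_one]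
    _ ≤ ‖A φ - (μ.re : ℂ) • φ‖ := hA.infDist_spectrum_mul_norm_le μ.re φ
    _ = s * ‖φ - P φ‖ * ‖P φ‖ := by
      rw [apply_sub_re_smul_eq_of_apply_add_smul_apply_eq_smul hA hPproj hφ heig, norm_smul,
        hPproj.norm_inner_smul_sub_apply hφ, norm_mul, Complex.norm_I, Complex.norm_real,
        Real.norm_of_nonneg hs.le, mul_one, mul_assoc]
end

section
/- Let (μ, φ) be an eigenpair of A_s with ‖φ‖ = 1, and write δ² = ‖φ − P φ‖², τ² = ‖P φ‖². Then A φ − (Re μ : ℂ) • φ = (s * Complex.I) • ((τ² : ℂ) • (φ − P φ) − (δ² : ℂ) • P φ). (This is the key identity (𝓛 − μ₁)φ = i s (τ² χ_{Ω∖R} φ − δ² χ_R φ) used in the proofs of Theorem 2.4 and Proposition 2.6.) -/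
/-!
Pairing the eigenvalue equation with `φ` and taking imaginary parts kills the real number
`⟪φ, A φ⟫`, so `Im μ = s ‖P φ‖²`. Hence `(A - Re μ) φ = i (Im μ) φ - i s P φ`, and splitting
`φ = (φ - P φ) + P φ` with `‖P φ‖² + ‖φ - P φ‖² = 1` gives the identity.
-/

open scoped InnerProductSpace

namespace LinearMap.IsSymmetricProjection

variable {𝕜 E : Type*} [RCLike 𝕜] [NormedAddCommGroup E] [InnerProductSpace 𝕜 E]
  {P : E →ₗ[𝕜] E}

theorem inner_apply_self_eq_norm_sq (hP : P.IsSymmetricProjection) (x : E) :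
    ⟪x, P x⟫_𝕜 = ((‖P x‖ ^ 2 : ℝ) : 𝕜) := by
  have hPP : P (P x) = P x := congr($hP.isIdempotentElem.eq x)
  rw [← hPP, ← hP.isSymmetric, hPP, inner_self_eq_norm_sq_to_K, RCLike.ofReal_pow]

theorem norm_sq_apply_add_norm_sq_sub_apply (hP : P.IsSymmetricProjection) (x : E) :
    ‖P x‖ ^ 2 + ‖x - P x‖ ^ 2 = ‖x‖ ^ 2 := by
  have hPP : P (P x) = P x := congr($hP.isIdempotentElem.eq x)
  have horth : ⟪P x, x - P x⟫_𝕜 = 0 := by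
    rw [hP.isSymmetric, map_sub, hPP, sub_self, inner_zero_right]
  simpa only [sq, add_sub_cancel] using
    (norm_add_sq_eq_norm_sq_add_norm_sq_of_inner_eq_zero _ _ horth).symm

end LinearMap.IsSymmetricProjection

theorem im_eigenvalue_mul_norm_sq_of_add_smul_I {H : Type*} [NormedAddCommGroup H]
    [InnerProductSpace ℂ H] {A P : H →ₗ[ℂ] H} (hA : A.IsSymmetric)
    (hP : P.IsSymmetricProjection) {s : ℝ} {μ : ℂ} {φ : H}
    (heig : A φ + (s * Complex.I) • P φ = μ • φ) : μ.im * ‖φ‖ ^ 2 = s * ‖P φ‖ ^ 2 := by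
  have hreal : (⟪φ, A φ⟫_ℂ).im = 0 := hA.im_inner_self_apply φ
  have h := congr(Complex.im ⟪φ, $heig⟫_ℂ)
  rw [inner_add_right, inner_smul_right, inner_smul_right, hP.inner_apply_self_eq_norm_sq,
    inner_self_eq_norm_sq_to_K, Complex.add_im, hreal, zero_add] at h
  simpa [← Complex.ofReal_pow] using h.symm

theorem stmt10_general {H : Type*} [NormedAddCommGroup H] [InnerProductSpace ℂ H] [CompleteSpace H]
    (A P : H →L[ℂ] H) (hA : IsSelfAdjoint A) (hP : IsSelfAdjoint P) (hP2 : P ∘L P = P)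
    (s : ℝ) (μ : ℂ) (φ : H) (hφ : ‖φ‖ = 1)
    (heig : A φ + (s * Complex.I) • P φ = μ • φ) :
    A φ - (μ.re : ℂ) • φ =
      (s * Complex.I) •
        (((‖P φ‖ ^ 2 : ℝ) : ℂ) • (φ - P φ) - ((‖φ - P φ‖ ^ 2 : ℝ) : ℂ) • P φ) := by
  have hproj : (P : H →ₗ[ℂ] H).IsSymmetricProjection :=
    ContinuousLinearMap.IsStarProjection.isSymmetricProjection ⟨hP2, hP⟩
  have him : μ.im = s * ‖P φ‖ ^ 2 := by
    simpa [hφ] using im_eigenvalue_mul_norm_sq_of_add_smul_I hA.isSymmetric hproj heig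
  have hδ : ‖φ - P φ‖ ^ 2 = 1 - ‖P φ‖ ^ 2 := by
    have := hproj.norm_sq_apply_add_norm_sq_sub_apply φ
    simp only [ContinuousLinearMap.coe_coe, hφ, one_pow] at this
    linarith
  have hμ : μ - μ.re = μ.im * Complex.I := by
    rw [sub_eq_iff_eq_add', Complex.re_add_im]
  calc A φ - (μ.re : ℂ) • φ = (μ - μ.re) • φ - (s * Complex.I) • P φ := by
        rw [eq_sub_of_add_eq heig]; module
    _ = _ := by
        rw [hμ, him, hδ]; push_cast; module

/-- The key identity `(A - Re μ) φ = i s (τ² (φ - P φ) - δ² P φ)` for an eigenpair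
`(μ, φ)` of `A_s` with `‖φ‖ = 1`, where `τ² = ‖P φ‖²` and `δ² = ‖φ - P φ‖²`. -/
theorem stmt10 {H : Type*} [NormedAddCommGroup H] [InnerProductSpace ℂ H] [CompleteSpace H]
    (A P : H →L[ℂ] H) (hA : IsSelfAdjoint A) (hP : IsSelfAdjoint P) (hP2 : P ∘L P = P)
    (s : ℝ) (hs : 0 < s) (μ : ℂ) (φ : H) (hφ : ‖φ‖ = 1)
    (heig : A φ + (s * Complex.I) • P φ = μ • φ) :
    A φ - (μ.re : ℂ) • φ =
      (s * Complex.I) •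
        (((‖P φ‖ ^ 2 : ℝ) : ℂ) • (φ - P φ) - ((‖φ - P φ‖ ^ 2 : ℝ) : ℂ) • P φ) :=
  stmt10_general A P hA hP hP2 s μ φ hφ heig
end

section
/- (Proposition 1.1, landscape bound) Let Ω be a bounded open subset of ℝ^d, let V : ℝ^d → ℝ be continuous with V x ≥ 0 for x ∈ Ω, and let λ ≥ 0 be real. Let ψ, u : ℝ^d → ℝ be continuous on the closure of Ω and twice continuously differentiable on Ω, satisfying the eigenvalue equation −Δψ x + V x * ψ x = λ * ψ x for all x ∈ Ω with ψ = 0 on the frontier of Ω, and the landscape equation −Δu x + V x * u x = 1 for all x ∈ Ω with u = 0 on the frontier of Ω (here Δ is the Laplacian, the trace of the second derivative). Then for every x ∈ Ω, |ψ x| ≤ λ * u x * M, where M = sSup of |ψ| over the closure of Ω. -/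
/-! Writing `M = sup |ψ|`, for `s = ±1` the function `w = λ M u + s ψ` satisfies
`-Δw + V w = λ (M + s ψ) ≥ 0` in `Ω` and `w = 0` on `∂Ω`, so `w ≥ 0` by the weak maximum
principle, which is exactly `|ψ| ≤ λ M u`. The maximum principle itself comes from the strict one
applied to `w + ε u`: at a negative interior minimum of a function `g` we have `Δg ≥ 0` and
`V g ≤ 0`, so `-Δg + V g > 0` is impossible; then let `ε → 0`. -/

/-- The Laplacian of `f : ℝ^d → ℝ` at `x`: the trace of the second derivative,
computed as the sum of the pure second partial derivatives along the standard
orthonormal basis of `EuclideanSpace ℝ (Fin d)`. -/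
noncomputable def laplacian {d : ℕ} (f : EuclideanSpace ℝ (Fin d) → ℝ)
    (x : EuclideanSpace ℝ (Fin d)) : ℝ :=
  ∑ i : Fin d,
    fderiv ℝ (fun y => fderiv ℝ f y (EuclideanSpace.single i 1)) x
      (EuclideanSpace.single i 1)

open Filter Topology Set
open scoped Laplacian

-- If `f'' a < 0`, the second-derivative test makes `a` a local maximum as well, so `f` is
-- locally constant and `f'' a = 0`.
theorem IsLocalMin.deriv_deriv_nonneg {f : ℝ → ℝ} {a : ℝ} (h : IsLocalMin f a)
    (hf : ContinuousAt f a) : 0 ≤ deriv (deriv f) a := by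
  by_contra! hneg
  have hconst : f =ᶠ[𝓝 a] fun _ => f a := by
    filter_upwards [h, isLocalMax_of_deriv_deriv_neg hneg h.deriv_eq_zero hf] with y hmin hmax
    exact le_antisymm hmax hmin
  have hderiv : deriv f =ᶠ[𝓝 a] fun _ => 0 :=
    hconst.eventuallyEq_nhds.mono fun y hy => by rw [hy.deriv_eq, deriv_const]
  simp [hderiv.deriv_eq] at hneg

section

variable {E : Type*} [NormedAddCommGroup E] [NormedSpace ℝ E] {f : E → ℝ} {x : E}

theorem ContDiffAt.hasFDerivAt_fderiv_apply (hf : ContDiffAt ℝ 2 f x) (v : E) :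
    HasFDerivAt (fun y => fderiv ℝ f y v)
      ((ContinuousLinearMap.apply ℝ ℝ v).comp (fderiv ℝ (fderiv ℝ f) x)) x :=
  (ContinuousLinearMap.apply ℝ ℝ v).hasFDerivAt.comp x
    ((hf.fderiv_right (m := 1) (by norm_num)).differentiableAt one_ne_zero).hasFDerivAt

theorem IsLocalMin.iteratedFDeriv_two_nonneg (h : IsLocalMin f x) (hf : ContDiffAt ℝ 2 f x)
    (v : E) : 0 ≤ iteratedFDeriv ℝ 2 f x ![v, v] := by
  set φ : ℝ → ℝ := fun t => f (x + t • v)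
  have hline : ∀ t : ℝ, HasDerivAt (fun t : ℝ => x + t • v) v t := fun t => by
    simpa using ((hasDerivAt_id t).smul_const v).const_add x
  have hline0 : Tendsto (fun t : ℝ => x + t • v) (𝓝 0) (𝓝 x) := by
    simpa using (hline 0).continuousAt.tendsto
  have hφmin : IsLocalMin φ 0 :=
    IsLocalMin.comp_continuous (g := fun t : ℝ => x + t • v) (by simpa using h)
      (hline 0).continuousAt
  have hφ' : deriv φ =ᶠ[𝓝 0] fun t => fderiv ℝ f (x + t • v) v := by
    filter_upwards [hline0.eventually (hf.eventually (by simp))] with t ht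
    exact ((ht.differentiableAt two_ne_zero).hasFDerivAt.comp_hasDerivAt t (hline t)).deriv
  have hφ'' : HasDerivAt (deriv φ) (iteratedFDeriv ℝ 2 f x ![v, v]) 0 := by
    refine HasDerivAt.congr_of_eventuallyEq ?_ hφ'
    have := (hf.hasFDerivAt_fderiv_apply v).comp_hasDerivAt_of_eq 0 (hline 0) (by simp)
    simpa [iteratedFDeriv_two_apply, Function.comp_def] using this
  rw [← hφ''.deriv]
  exact hφmin.deriv_deriv_nonneg (hf.continuousAt.comp_of_eq (hline 0).continuousAt (by simp))

end

section

variable {E : Type*} [NormedAddCommGroup E] [InnerProductSpace ℝ E] [FiniteDimensional ℝ E]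

theorem IsLocalMin.laplacian_nonneg {f : E → ℝ} {x : E} (h : IsLocalMin f x)
    (hf : ContDiffAt ℝ 2 f x) : 0 ≤ Δ f x := by
  rw [InnerProductSpace.laplacian_eq_iteratedFDeriv_stdOrthonormalBasis]
  exact Finset.sum_nonneg fun i _ => h.iteratedFDeriv_two_nonneg hf _

theorem nonneg_of_strict_supersolution {Ω : Set E} (hΩo : IsOpen Ω) (hΩb : Bornology.IsBounded Ω)
    {V : E → ℝ} (hV0 : ∀ x ∈ Ω, 0 ≤ V x) {g : E → ℝ} (hgc : ContinuousOn g (closure Ω))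
    (hgd : ContDiffOn ℝ 2 g Ω) (hg : ∀ x ∈ Ω, 0 < -Δ g x + V x * g x)
    (hgb : ∀ x ∈ frontier Ω, 0 ≤ g x) : ∀ x ∈ Ω, 0 ≤ g x := by
  intro x hx
  obtain ⟨x₀, hx₀, hmin⟩ :=
    hΩb.isCompact_closure.exists_isMinOn ⟨x, subset_closure hx⟩ hgc
  refine le_trans ?_ (hmin (subset_closure hx))
  by_contra! hneg
  have hx₀Ω : x₀ ∈ Ω := by
    by_contra hx₀Ω
    exact hneg.not_ge (hgb x₀ (by rw [hΩo.frontier_eq]; exact ⟨hx₀, hx₀Ω⟩))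
  have hlap : 0 ≤ Δ g x₀ :=
    IsLocalMin.laplacian_nonneg
      (Filter.mem_of_superset (hΩo.mem_nhds hx₀Ω) fun y hy => hmin (subset_closure hy))
      (hgd.contDiffAt (hΩo.mem_nhds hx₀Ω))
  nlinarith [hg x₀ hx₀Ω, hV0 x₀ hx₀Ω]

theorem nonneg_of_supersolution {Ω : Set E} (hΩo : IsOpen Ω) (hΩb : Bornology.IsBounded Ω)
    {V : E → ℝ} (hV0 : ∀ x ∈ Ω, 0 ≤ V x) {u : E → ℝ} (huc : ContinuousOn u (closure Ω))
    (hud : ContDiffOn ℝ 2 u Ω) (hu : ∀ x ∈ Ω, 0 < -Δ u x + V x * u x)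
    (hub : ∀ x ∈ frontier Ω, 0 ≤ u x) {w : E → ℝ} (hwc : ContinuousOn w (closure Ω))
    (hwd : ContDiffOn ℝ 2 w Ω) (hw : ∀ x ∈ Ω, 0 ≤ -Δ w x + V x * w x)
    (hwb : ∀ x ∈ frontier Ω, 0 ≤ w x) : ∀ x ∈ Ω, 0 ≤ w x := by
  intro x hx
  have hpert : ∀ ε > 0, 0 ≤ w x + ε * u x := by
    intro ε hε
    refine nonneg_of_strict_supersolution hΩo hΩb hV0 (g := w + ε • u)
      (hwc.add (huc.const_smul ε)) (hwd.add (hud.const_smul ε)) (fun y hy => ?_)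
      (fun y hy => ?_) x hx
    · have hyn := hΩo.mem_nhds hy
      rw [(hwd.contDiffAt hyn).laplacian_add (f₂ := ε • u) ((hud.contDiffAt hyn).const_smul ε),
        InnerProductSpace.laplacian_smul ε (hud.contDiffAt hyn)]
      simp only [Pi.add_apply, Pi.smul_apply, smul_eq_mul]
      nlinarith [hw y hy, hu y hy]
    · simpa using add_nonneg (hwb y hy) (mul_nonneg hε.le (hub y hy))
  have hlim : Tendsto (fun ε => w x + ε * u x) (𝓝[>] 0) (𝓝 (w x)) := by
    have hcont : Continuous fun ε => w x + ε * u x := by fun_prop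
    exact tendsto_nhdsWithin_of_tendsto_nhds (by simpa using hcont.tendsto 0)
  exact ge_of_tendsto hlim (eventually_nhdsWithin_of_forall fun ε hε => hpert ε hε)

end

theorem abs_le_mul_landscape_mul_sSup {E : Type*} [NormedAddCommGroup E] [InnerProductSpace ℝ E]
    [FiniteDimensional ℝ E] {Ω : Set E} (hΩo : IsOpen Ω) (hΩb : Bornology.IsBounded Ω)
    {V : E → ℝ} (hV0 : ∀ x ∈ Ω, 0 ≤ V x) {lam : ℝ} (hlam : 0 ≤ lam) {ψ u : E → ℝ}
    (hψc : ContinuousOn ψ (closure Ω)) (huc : ContinuousOn u (closure Ω))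
    (hψd : ContDiffOn ℝ 2 ψ Ω) (hud : ContDiffOn ℝ 2 u Ω)
    (hψeq : ∀ x ∈ Ω, -Δ ψ x + V x * ψ x = lam * ψ x) (hψbc : ∀ x ∈ frontier Ω, ψ x = 0)
    (hueq : ∀ x ∈ Ω, -Δ u x + V x * u x = 1) (hubc : ∀ x ∈ frontier Ω, 0 ≤ u x) :
    ∀ x ∈ Ω, |ψ x| ≤ lam * u x * sSup ((fun y => |ψ y|) '' closure Ω) := by
  intro x hx
  set M := sSup ((fun y => |ψ y|) '' closure Ω)
  have hM : ∀ y ∈ closure Ω, |ψ y| ≤ M := fun y hy =>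
    le_csSup (hΩb.isCompact_closure.image_of_continuousOn hψc.abs).bddAbove ⟨y, hy, rfl⟩
  have hM0 : 0 ≤ M := (abs_nonneg _).trans (hM x (subset_closure hx))
  have hcomp : ∀ s : ℝ, |s| ≤ 1 → 0 ≤ lam * M * u x + s * ψ x := by
    intro s hs
    refine nonneg_of_supersolution hΩo hΩb hV0 huc hud
      (fun y hy => by rw [hueq y hy]; exact one_pos) hubc (w := (lam * M) • u + s • ψ)
      ((huc.const_smul (lam * M)).add (hψc.const_smul s))
      ((hud.const_smul (lam * M)).add (hψd.const_smul s)) (fun y hy => ?_)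
      (fun y hy => by simp [hψbc y hy, mul_nonneg (mul_nonneg hlam hM0) (hubc y hy)]) x hx
    have hyn := hΩo.mem_nhds hy
    have hsψ : |s * ψ y| ≤ M := by
      rw [abs_mul]
      exact (mul_le_of_le_one_left (abs_nonneg _) hs).trans (hM y (subset_closure hy))
    have hL : -Δ ((lam * M) • u + s • ψ) y + V y * ((lam * M) • u + s • ψ) y
        = lam * (M + s * ψ y) := by
      rw [((hud.contDiffAt hyn).const_smul (lam * M)).laplacian_add (f₁ := (lam * M) • u)
          (f₂ := s • ψ) ((hψd.contDiffAt hyn).const_smul s),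
        InnerProductSpace.laplacian_smul _ (hud.contDiffAt hyn),
        InnerProductSpace.laplacian_smul _ (hψd.contDiffAt hyn)]
      simp only [Pi.add_apply, Pi.smul_apply, smul_eq_mul]
      linear_combination (lam * M) * hueq y hy + s * hψeq y hy
    rw [hL]
    exact mul_nonneg hlam (by linarith [neg_abs_le (s * ψ y)])
  have hplus := hcomp 1 (by norm_num)
  have hminus := hcomp (-1) (by norm_num)
  exact abs_le.mpr ⟨by linarith, by linarith⟩

theorem ContDiffAt.laplacian_eq_innerProductSpace_laplacian {d : ℕ}
    {f : EuclideanSpace ℝ (Fin d) → ℝ} {x : EuclideanSpace ℝ (Fin d)} (hf : ContDiffAt ℝ 2 f x) :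
    laplacian f x = Δ f x := by
  rw [InnerProductSpace.laplacian_eq_iteratedFDeriv_orthonormalBasis f
    (EuclideanSpace.basisFun (Fin d) ℝ)]
  simp [laplacian, (hf.hasFDerivAt_fderiv_apply _).fderiv, iteratedFDeriv_two_apply]

theorem stmt19_general {d : ℕ} (Ω : Set (EuclideanSpace ℝ (Fin d)))
    (hΩo : IsOpen Ω) (hΩb : Bornology.IsBounded Ω)
    (V : EuclideanSpace ℝ (Fin d) → ℝ)
    (hV0 : ∀ x ∈ Ω, 0 ≤ V x)
    (lam : ℝ) (hlam : 0 ≤ lam)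
    (ψ u : EuclideanSpace ℝ (Fin d) → ℝ)
    (hψc : ContinuousOn ψ (closure Ω)) (huc : ContinuousOn u (closure Ω))
    (hψd : ContDiffOn ℝ 2 ψ Ω) (hud : ContDiffOn ℝ 2 u Ω)
    (hψeq : ∀ x ∈ Ω, -(laplacian ψ x) + V x * ψ x = lam * ψ x)
    (hψbc : ∀ x ∈ frontier Ω, ψ x = 0)
    (hueq : ∀ x ∈ Ω, -(laplacian u x) + V x * u x = 1)
    (hubc : ∀ x ∈ frontier Ω, u x = 0) :
    ∀ x ∈ Ω, |ψ x| ≤ lam * u x * sSup ((fun y => |ψ y|) '' closure Ω) := by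
  have hΔ : ∀ f, ContDiffOn ℝ 2 f Ω → ∀ x ∈ Ω, laplacian f x = Δ f x := fun f hf x hx =>
    (hf.contDiffAt (hΩo.mem_nhds hx)).laplacian_eq_innerProductSpace_laplacian
  refine abs_le_mul_landscape_mul_sSup hΩo hΩb hV0 hlam hψc huc hψd hud
    (fun x hx => ?_) hψbc (fun x hx => ?_) (fun x hx => (hubc x hx).ge)
  · rw [← hΔ ψ hψd x hx, hψeq x hx]
  · rw [← hΔ u hud x hx, hueq x hx]

/-- Proposition 1.1, landscape bound: if `-Δψ + Vψ = λψ` in `Ω` with `ψ = 0` on `∂Ω`,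
and `-Δu + Vu = 1` in `Ω` with `u = 0` on `∂Ω` (the landscape function), where
`Ω ⊆ ℝ^d` is bounded open, `V ≥ 0` on `Ω` is continuous and `λ ≥ 0`, then
`|ψ(x)| ≤ λ u(x) M` for all `x ∈ Ω`, where `M = sup_{closure Ω} |ψ|`. -/
theorem stmt19 {d : ℕ} (Ω : Set (EuclideanSpace ℝ (Fin d)))
    (hΩo : IsOpen Ω) (hΩb : Bornology.IsBounded Ω)
    (V : EuclideanSpace ℝ (Fin d) → ℝ) (hVc : Continuous V)
    (hV0 : ∀ x ∈ Ω, 0 ≤ V x)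
    (lam : ℝ) (hlam : 0 ≤ lam)
    (ψ u : EuclideanSpace ℝ (Fin d) → ℝ)
    (hψc : ContinuousOn ψ (closure Ω)) (huc : ContinuousOn u (closure Ω))
    (hψd : ContDiffOn ℝ 2 ψ Ω) (hud : ContDiffOn ℝ 2 u Ω)
    (hψeq : ∀ x ∈ Ω, -(laplacian ψ x) + V x * ψ x = lam * ψ x)
    (hψbc : ∀ x ∈ frontier Ω, ψ x = 0)
    (hueq : ∀ x ∈ Ω, -(laplacian u x) + V x * u x = 1)
    (hubc : ∀ x ∈ frontier Ω, u x = 0) :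
    ∀ x ∈ Ω, |ψ x| ≤ lam * u x * sSup ((fun y => |ψ y|) '' closure Ω) :=
  stmt19_general Ω hΩo hΩb V hV0 lam hlam ψ u hψc huc hψd hud hψeq hψbc hueq hubc
end
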